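/- The KL-divergence penalty of the robust rule on clean data is bounded by the entropy gap: for q* a minimax-robust decision rule over 𝒟 ∋ μ, KL(μ_{Y|X} ‖ q*(·|X) | μ_X) ≤ max_{ν∈𝒟} H_ν(Y|X) − H_μ(Y|X), and in particular this KL divergence is finite. -/

import Mathlib

open scoped BigOperators

variable {𝒳 𝒴 : Type*}

/-- `p` is a probability distribution on `𝒳 × 𝒴`. -/
def IsDist [Fintype 𝒳] [Fintype 𝒴] (p : 𝒳 × 𝒴 → ℝ) : Prop :=
  (∀ a, 0 ≤ p a) ∧ ∑ a, p a = 1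

/-- `q` is a conditional distribution (stochastic matrix) from `𝒳` to `𝒴`. -/
def IsCond [Fintype 𝒴] (q : 𝒳 → 𝒴 → ℝ) : Prop :=
  (∀ x y, 0 ≤ q x y) ∧ ∀ x, ∑ y, q x y = 1

/-- Marginal of `X`. -/
noncomputable def margX [Fintype 𝒴] (p : 𝒳 × 𝒴 → ℝ) (x : 𝒳) : ℝ := ∑ y, p (x, y)

/-- Conditional entropy `H_p(Y|X)` (natural log, `0 log 0 = 0`). -/
noncomputable def condEnt [Fintype 𝒳] [Fintype 𝒴] (p : 𝒳 × 𝒴 → ℝ) : ℝ :=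
  -∑ a, p a * Real.log (p a / margX p a.1)

/-- Expected cross-entropy loss `E_p[-log q(Y|X)]`, valued in `EReal` with value `⊤`
when `q(y|x) = 0` while `p(x,y) > 0`. -/
noncomputable def CEE [Fintype 𝒳] [Fintype 𝒴] (p : 𝒳 × 𝒴 → ℝ) (q : 𝒳 → 𝒴 → ℝ) : EReal :=
  ∑ a, if q a.1 a.2 = 0 ∧ 0 < p a then (⊤ : EReal)
       else ((p a * (-Real.log (q a.1 a.2)) : ℝ) : EReal)

/-- Conditional KL divergence `KL(μ_{Y|X} ‖ q(·|X) | μ_X) = Σ_{x,y} μ(x,y) log(μ(y|x)/q(y|x))`,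
valued in `EReal` with value `⊤` when `q(y|x) = 0` while `μ(x,y) > 0`. -/
noncomputable def condKLE [Fintype 𝒳] [Fintype 𝒴] (μ : 𝒳 × 𝒴 → ℝ) (q : 𝒳 → 𝒴 → ℝ) : EReal :=
  ∑ a, if q a.1 a.2 = 0 ∧ 0 < μ a then (⊤ : EReal)
       else ((μ a * Real.log ((μ a / margX μ a.1) / q a.1 a.2) : ℝ) : EReal)

/-! Since `E_μ[-log q*] = H_μ(Y|X) + KL(μ_{Y|X} ‖ q* | μ_X)`, it suffices to show that the
minimax value `inf_q sup_{ν ∈ 𝒟} E_ν[-log q]` is at most `sup_{ν ∈ 𝒟} H_ν(Y|X)`. Fix `0 < s < 1`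
and restrict to rules whose entries are at least `(1 - s) / |𝒴|`: a compact convex set on which
the cross-entropy is continuous and convex in the rule and linear in the distribution. Against
any mixture `ν̄ ∈ 𝒟` the smoothed conditional `s ν̄(·|x) + (1 - s) / |𝒴|` pays at most
`H_ν̄(Y|X) - log s`. A separating hyperplane in `ℝ^ι` turns this into one rule that is good
against every member of a finite family `(ν_i)`, the weights of the mixture being the
coefficients of the hyperplane, and compactness into one rule good against all of `𝒟`.
Letting `s → 1` gives the bound. -/
theorem exists_mem_stdSimplex_forall_le_sum_mul {ι : Type*} [Fintype ι] {S : Set (ι → ℝ)}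
    (hS : Convex ℝ S) (hSne : S.Nonempty) (hSup : ∀ z ∈ S, ∀ z', z ≤ z' → z' ∈ S) {B : ℝ}
    (hB : ∀ z ∈ S, ∃ i, B ≤ z i) :
    ∃ w ∈ stdSimplex ℝ ι, ∀ z ∈ S, B ≤ ∑ i, w i * z i := by
  classical
  set T : Set (ι → ℝ) := Set.univ.pi fun _ => Set.Iio B
  have hdisj : Disjoint T S := Set.disjoint_left.2 fun z hzT hzS =>
    let ⟨i, hi⟩ := hB z hzS
    (Set.mem_univ_pi.1 hzT i).not_ge hi
  obtain ⟨φ, u, hφT, hφS⟩ := geometric_hahn_banach_open (convex_pi fun _ _ => convex_Iio B)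
    (isOpen_set_pi Set.finite_univ fun _ _ => isOpen_Iio) hS hdisj
  set e : ι → ι → ℝ := fun i j => if i = j then 1 else 0
  set c : ι → ℝ := fun i => φ (e i)
  have hφ : ∀ z, φ z = ∑ i, c i * z i := fun z => by
    simpa [mul_comm] using LinearMap.pi_apply_eq_sum_univ (φ : (ι → ℝ) →ₗ[ℝ] ℝ) z
  obtain ⟨z₀, hz₀⟩ := hSne
  -- `S` is stable under increasing a coordinate, so `φ` can only be bounded below on it if
  -- all its coefficients are nonnegative.
  have hc : ∀ i, 0 ≤ c i := by
    intro i
    by_contra! hci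
    set t := (φ z₀ - u + 1) / -c i
    have hmem : z₀ + t • e i ∈ S := hSup z₀ hz₀ _ fun j => le_add_of_nonneg_right <| by
      have : 0 ≤ t := div_nonneg (by linarith [hφS z₀ hz₀]) (by linarith)
      simp only [Pi.smul_apply, smul_eq_mul, e]
      split_ifs <;> simp [this]
    have := hφS _ hmem
    rw [map_add, map_smul, smul_eq_mul, div_mul_eq_mul_div, div_neg,
      mul_div_cancel_right₀ _ hci.ne] at this
    linarith
  have hconst : ∀ r, φ (fun _ => r) = r * ∑ i, c i := fun r => by
    rw [hφ, Finset.mul_sum]; exact Finset.sum_congr rfl fun i _ => mul_comm _ _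
  have hσ : 0 < ∑ i, c i := by
    refine (Finset.sum_nonneg fun i _ => hc i).lt_of_ne fun h => ?_
    have h0 : ∀ z, φ z = 0 := fun z => by
      rw [hφ]
      exact Finset.sum_eq_zero fun i hi => by
        rw [(Finset.sum_eq_zero_iff_of_nonneg fun i _ => hc i).1 h.symm i hi, zero_mul]
    have := hφT (fun _ => B - 1) (Set.mem_univ_pi.2 fun _ => by simp)
    linarith [hφS z₀ hz₀, h0 z₀, h0 fun _ => B - 1]
  refine ⟨fun i => c i / ∑ j, c j,
    ⟨fun i => div_nonneg (hc i) hσ.le, by rw [← Finset.sum_div, div_self hσ.ne']⟩, fun z hz => ?_⟩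
  -- Otherwise the constant vector at level `φ z / ∑ c` would lie in `T` while `φ` takes the
  -- value `φ z ≥ u` there.
  by_contra! hlt
  simp only [div_mul_eq_mul_div, ← Finset.sum_div, ← hφ] at hlt
  have := hφT (fun _ => φ z / ∑ i, c i) (Set.mem_univ_pi.2 fun _ => hlt)
  rw [hconst, div_mul_cancel₀ _ hσ.ne'] at this
  linarith [hφS z hz]

theorem exists_forall_lt_of_forall_sum_mul_lt {E ι : Type*} [AddCommGroup E] [Module ℝ E]
    [Fintype ι] {K : Set E} (hK : Convex ℝ K) (hKne : K.Nonempty) {f : ι → E → ℝ}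
    (hf : ∀ i, ConvexOn ℝ K (f i)) {B : ℝ}
    (h : ∀ w ∈ stdSimplex ℝ ι, ∃ q ∈ K, ∑ i, w i * f i q < B) :
    ∃ q ∈ K, ∀ i, f i q < B := by
  by_contra! hK'
  set S : Set (ι → ℝ) := {z | ∃ q ∈ K, ∀ i, f i q ≤ z i}
  have hS : Convex ℝ S := by
    rintro _ ⟨q, hq, hqz⟩ _ ⟨q', hq', hq'z⟩ a b ha hb hab
    refine ⟨a • q + b • q', hK hq hq' ha hb hab, fun i => ?_⟩
    calc f i (a • q + b • q') ≤ a • f i q + b • f i q' := (hf i).2 hq hq' ha hb hab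
      _ ≤ _ := by
        simp only [Pi.add_apply, Pi.smul_apply]
        gcongr
        exacts [hqz i, hq'z i]
  obtain ⟨q₀, hq₀⟩ := hKne
  obtain ⟨w, hw, hwS⟩ := exists_mem_stdSimplex_forall_le_sum_mul hS
    ⟨fun i => f i q₀, q₀, hq₀, fun _ => le_rfl⟩
    (fun _ ⟨q, hq, hqz⟩ _ hzz' => ⟨q, hq, fun i => (hqz i).trans (hzz' i)⟩)
    (fun _ ⟨q, hq, hqz⟩ => let ⟨i, hi⟩ := hK' q hq; ⟨i, hi.trans (hqz i)⟩)
  obtain ⟨q, hq, hqB⟩ := h w hw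
  exact (hwS _ ⟨q, hq, fun _ => le_rfl⟩).not_gt hqB

theorem IsCompact.exists_forall_le_of_finset {X ι : Type*} [TopologicalSpace X] [T2Space X]
    {K : Set X} (hK : IsCompact K) {f : ι → X → ℝ} (hf : ∀ i, ContinuousOn (f i) K) {B : ℝ}
    (h : ∀ u : Finset ι, ∃ q ∈ K, ∀ i ∈ u, f i q ≤ B) : ∃ q ∈ K, ∀ i, f i q ≤ B := by
  obtain ⟨q, hqK, hq⟩ := hK.inter_iInter_nonempty (fun i => K ∩ f i ⁻¹' Set.Iic B)
    (fun i => (hf i).preimage_isClosed_of_isClosed hK.isClosed isClosed_Iic) fun u => by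
      obtain ⟨q, hqK, hq⟩ := h u
      exact ⟨q, hqK, Set.mem_iInter₂.2 fun i hi => ⟨hqK, hq i hi⟩⟩
  exact ⟨q, hqK, fun i => (Set.mem_iInter.1 hq i).2⟩

section Rules

variable [Fintype 𝒴]

theorem IsCond.le_one {q : 𝒳 → 𝒴 → ℝ} (hq : IsCond q) (x : 𝒳) (y : 𝒴) : q x y ≤ 1 :=
  hq.2 x ▸ Finset.single_le_sum (fun y _ => hq.1 x y) (Finset.mem_univ y)

theorem le_margX {p : 𝒳 × 𝒴 → ℝ} (hp : ∀ a, 0 ≤ p a) (a : 𝒳 × 𝒴) : p a ≤ margX p a.1 :=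
  Finset.single_le_sum (f := fun y => p (a.1, y)) (fun y _ => hp (a.1, y)) (Finset.mem_univ a.2)

def condAtLeast (δ : ℝ) : Set (𝒳 → 𝒴 → ℝ) := {q | IsCond q ∧ ∀ x y, δ ≤ q x y}

theorem condAtLeast_subset_pos {δ : ℝ} (hδ : 0 < δ) :
    condAtLeast (𝒳 := 𝒳) (𝒴 := 𝒴) δ ⊆ {q | ∀ x y, 0 < q x y} :=
  fun _ hq x y => hδ.trans_le (hq.2 x y)

theorem smul_add_smul_mem_condAtLeast {δ δ' : ℝ} {q q' : 𝒳 → 𝒴 → ℝ} (hq : q ∈ condAtLeast δ)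
    (hq' : q' ∈ condAtLeast δ') {a b : ℝ} (ha : 0 ≤ a) (hb : 0 ≤ b) (hab : a + b = 1) :
    a • q + b • q' ∈ condAtLeast (a * δ + b * δ') := by
  obtain ⟨⟨hq0, hq1⟩, hqδ⟩ := hq
  obtain ⟨⟨hq0', hq1'⟩, hqδ'⟩ := hq'
  simp only [condAtLeast, IsCond, Set.mem_ofPred_eq, Pi.add_apply, Pi.smul_apply, smul_eq_mul]
  refine ⟨⟨fun x y => by have := hq0 x y; have := hq0' x y; positivity, fun x => ?_⟩,
    fun x y => by gcongr <;> simp only [hqδ, hqδ']⟩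
  rw [Finset.sum_add_distrib, ← Finset.mul_sum, ← Finset.mul_sum, hq1, hq1', mul_one, mul_one,
    hab]

theorem convex_condAtLeast (δ : ℝ) : Convex ℝ (condAtLeast (𝒳 := 𝒳) (𝒴 := 𝒴) δ) :=
  fun _ hq _ hq' a b ha hb hab => by
    simpa only [← add_mul, hab, one_mul] using smul_add_smul_mem_condAtLeast hq hq' ha hb hab

theorem isCompact_condAtLeast (δ : ℝ) :
    IsCompact (condAtLeast (𝒳 := 𝒳) (𝒴 := 𝒴) δ) := by
  have hclosed : IsClosed (condAtLeast (𝒳 := 𝒳) (𝒴 := 𝒴) δ) := by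
    simp only [condAtLeast, IsCond, Set.ofPred_and, Set.ofPred_forall]
    refine ((isClosed_iInter fun x => isClosed_iInter fun y => isClosed_le continuous_const
      (by fun_prop)).inter (isClosed_iInter fun x => isClosed_eq (by fun_prop)
      continuous_const)).inter (isClosed_iInter fun x => isClosed_iInter fun y =>
      isClosed_le continuous_const (by fun_prop))
  refine (isCompact_univ_pi fun _ => isCompact_univ_pi fun _ => isCompact_Icc (a := 0) (b := 1))
    |>.of_isClosed_subset hclosed fun q hq => ?_
  simp only [Set.mem_univ_pi]
  exact fun x y => ⟨hq.1.1 x y, hq.1.le_one x y⟩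

noncomputable def unifCond : 𝒳 → 𝒴 → ℝ := fun _ _ => (Fintype.card 𝒴 : ℝ)⁻¹

theorem unifCond_mem_condAtLeast [Nonempty 𝒴] :
    unifCond ∈ condAtLeast (𝒳 := 𝒳) (𝒴 := 𝒴) (Fintype.card 𝒴 : ℝ)⁻¹ :=
  ⟨⟨fun _ _ => by simp [unifCond], fun _ => by simp [unifCond]⟩, fun _ _ => le_rfl⟩

noncomputable def condOf (p : 𝒳 × 𝒴 → ℝ) : 𝒳 → 𝒴 → ℝ := fun x y =>
  if margX p x = 0 then (Fintype.card 𝒴 : ℝ)⁻¹ else p (x, y) / margX p x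

theorem isCond_condOf [Nonempty 𝒴] {p : 𝒳 × 𝒴 → ℝ} (hp : ∀ a, 0 ≤ p a) :
    IsCond (condOf p) := by
  refine ⟨fun x y => ?_, fun x => ?_⟩ <;> by_cases hm : margX p x = 0 <;>
    simp only [condOf, hm, if_true, if_false]
  · positivity
  · exact div_nonneg (hp _) (Finset.sum_nonneg fun y _ => hp (x, y))
  · simp
  · exact (Finset.sum_div _ _ _).symm.trans (div_self hm)

noncomputable def smoothed (s : ℝ) (p : 𝒳 × 𝒴 → ℝ) : 𝒳 → 𝒴 → ℝ :=
  s • condOf p + (1 - s) • unifCond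

theorem smoothed_mem_condAtLeast [Nonempty 𝒴] {s : ℝ} (hs0 : 0 ≤ s) (hs1 : s ≤ 1)
    {p : 𝒳 × 𝒴 → ℝ} (hp : ∀ a, 0 ≤ p a) :
    smoothed s p ∈ condAtLeast ((1 - s) / Fintype.card 𝒴) := by
  have := smul_add_smul_mem_condAtLeast ⟨isCond_condOf hp, (isCond_condOf hp).1⟩
    unifCond_mem_condAtLeast hs0 (sub_nonneg.2 hs1) (add_sub_cancel s 1)
  rwa [mul_zero, zero_add, ← div_eq_mul_inv] at this

end Rules

theorem EReal.coe_finsetSum {α : Type*} (s : Finset α) (f : α → ℝ) :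
    ((∑ a ∈ s, f a : ℝ) : EReal) = ∑ a ∈ s, (f a : EReal) :=
  map_sum (⟨⟨Real.toEReal, EReal.coe_zero⟩, EReal.coe_add⟩ : ℝ →+ EReal) f s

section Entropy

variable [Fintype 𝒳] [Fintype 𝒴]

theorem IsDist.nonempty_snd {p : 𝒳 × 𝒴 → ℝ} (hp : IsDist p) : Nonempty 𝒴 := by
  by_contra h
  rw [not_nonempty_iff] at h
  simpa using hp.2

theorem condEnt_le_card {p : 𝒳 × 𝒴 → ℝ} (hp : IsDist p) : condEnt p ≤ Fintype.card 𝒴 := by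
  have hterm : ∀ a, -(p a * Real.log (p a / margX p a.1)) ≤ margX p a.1 := by
    intro a
    rcases (hp.1 a).eq_or_lt with h | h
    · simpa [← h] using le_margX hp.1 a
    have hm := h.trans_le (le_margX hp.1 a)
    calc -(p a * Real.log (p a / margX p a.1)) = p a * Real.log (margX p a.1 / p a) := by
          rw [← inv_div, Real.log_inv]; ring
      _ ≤ p a * (margX p a.1 / p a - 1) := by
          gcongr; exact Real.log_le_sub_one_of_pos (div_pos hm h)
      _ ≤ margX p a.1 := by rw [mul_sub, mul_div_cancel₀ _ h.ne']; linarith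
  have hsum : ∑ a : 𝒳 × 𝒴, margX p a.1 = Fintype.card 𝒴 := by
    simp only [Fintype.sum_prod_type, Finset.sum_const, Finset.card_univ, nsmul_eq_mul,
      ← Finset.mul_sum, margX]
    rw [← Fintype.sum_prod_type' (f := fun x y => p (x, y)), hp.2, mul_one]
  rw [condEnt, ← Finset.sum_neg_distrib, ← hsum]
  exact Finset.sum_le_sum fun a _ => hterm a

theorem CEE_eq_condEnt_add_condKLE {p : 𝒳 × 𝒴 → ℝ} (hp : IsDist p) {q : 𝒳 → 𝒴 → ℝ}
    (hq : ∀ x y, 0 ≤ q x y) : CEE p q = condEnt p + condKLE p q := by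
  rw [condEnt, ← Finset.sum_neg_distrib, EReal.coe_finsetSum, CEE, condKLE,
    ← Finset.sum_add_distrib]
  refine Finset.sum_congr rfl fun a _ => ?_
  split_ifs with h
  · rw [EReal.coe_add_top]
  rw [← EReal.coe_add, EReal.coe_eq_coe_iff]
  rcases (hp.1 a).eq_or_lt with h0 | h0
  · simp [← h0]
  have hq0 : 0 < q a.1 a.2 := (hq a.1 a.2).lt_of_ne fun hc => h ⟨hc.symm, h0⟩
  have hm := h0.trans_le (le_margX hp.1 a)
  rw [Real.log_div (div_pos h0 hm).ne' hq0.ne']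
  ring

end Entropy

section CrossEntropy

variable [Fintype 𝒳] [Fintype 𝒴]

noncomputable def crossEnt (p : 𝒳 × 𝒴 → ℝ) (q : 𝒳 → 𝒴 → ℝ) : ℝ :=
  ∑ a, p a * -Real.log (q a.1 a.2)

theorem CEE_eq_crossEnt {q : 𝒳 → 𝒴 → ℝ} (hq : ∀ x y, 0 < q x y) (p : 𝒳 × 𝒴 → ℝ) :
    CEE p q = crossEnt p q := by
  rw [CEE, crossEnt, EReal.coe_finsetSum]
  exact Finset.sum_congr rfl fun a _ => if_neg fun h => (hq a.1 a.2).ne' h.1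

theorem crossEnt_sum_smul {ι : Type*} (t : Finset ι) (w : ι → ℝ) (ν : ι → 𝒳 × 𝒴 → ℝ)
    (q : 𝒳 → 𝒴 → ℝ) : crossEnt (∑ i ∈ t, w i • ν i) q = ∑ i ∈ t, w i * crossEnt (ν i) q := by
  simp only [crossEnt, Finset.sum_apply, Pi.smul_apply, smul_eq_mul, Finset.sum_mul,
    Finset.mul_sum, mul_assoc]
  exact Finset.sum_comm

theorem continuousOn_crossEnt (p : 𝒳 × 𝒴 → ℝ) :
    ContinuousOn (crossEnt p) {q | ∀ x y, 0 < q x y} :=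
  continuousOn_finsetSum _ fun a _ => continuousOn_const.mul <| ContinuousOn.neg <|
    ContinuousOn.log (by fun_prop) fun _ hq => (hq a.1 a.2).ne'

theorem convexOn_crossEnt {p : 𝒳 × 𝒴 → ℝ} (hp : ∀ a, 0 ≤ p a) :
    ConvexOn ℝ {q | ∀ x y, 0 < q x y} (crossEnt p) := by
  refine ⟨fun q hq q' hq' a b ha hb hab x y => ?_, fun q hq q' hq' a b ha hb hab => ?_⟩
  · simp only [Pi.add_apply, Pi.smul_apply, smul_eq_mul]
    rcases ha.eq_or_lt with rfl | ha
    · obtain rfl : b = 1 := by linarith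
      simpa using hq' x y
    · have := hq x y; have := hq' x y; positivity
  simp only [crossEnt, smul_eq_mul, Finset.mul_sum, ← Finset.sum_add_distrib]
  refine Finset.sum_le_sum fun i _ => ?_
  have hlog := strictConcaveOn_log_Ioi.concaveOn.2 (hq i.1 i.2) (hq' i.1 i.2) ha hb hab
  simp only [smul_eq_mul] at hlog
  simp only [Pi.add_apply, Pi.smul_apply, smul_eq_mul]
  nlinarith [hp i]

theorem crossEnt_smoothed_le [Nonempty 𝒴] {p : 𝒳 × 𝒴 → ℝ} (hp : IsDist p) {s : ℝ}
    (hs0 : 0 < s) (hs1 : s ≤ 1) : crossEnt p (smoothed s p) ≤ condEnt p - Real.log s := by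
  have hterm : ∀ a, p a * -Real.log (smoothed s p a.1 a.2)
      ≤ p a * -Real.log s - p a * Real.log (p a / margX p a.1) := by
    intro a
    rcases (hp.1 a).eq_or_lt with h | h
    · simp [← h]
    have hm : 0 < margX p a.1 := h.trans_le (le_margX hp.1 a)
    have hcond : 0 < p a / margX p a.1 := div_pos h hm
    have hle : s * (p a / margX p a.1) ≤ smoothed s p a.1 a.2 := by
      have : 0 ≤ (1 - s) * (Fintype.card 𝒴 : ℝ)⁻¹ := by
        have := sub_nonneg.2 hs1; positivity
      simp only [smoothed, condOf, unifCond, if_neg hm.ne', Pi.add_apply, Pi.smul_apply,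
        smul_eq_mul]
      linarith
    have hlog := Real.log_le_log (mul_pos hs0 hcond) hle
    rw [Real.log_mul hs0.ne' hcond.ne'] at hlog
    nlinarith
  calc crossEnt p (smoothed s p)
      ≤ ∑ a, (p a * -Real.log s - p a * Real.log (p a / margX p a.1)) :=
        Finset.sum_le_sum fun a _ => hterm a
    _ = condEnt p - Real.log s := by
        rw [Finset.sum_sub_distrib, ← Finset.sum_mul, hp.2, condEnt]; ring

end CrossEntropy

section Minimax

variable [Fintype 𝒳] [Fintype 𝒴] [Nonempty 𝒴] {𝒟 : Set (𝒳 × 𝒴 → ℝ)}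

theorem exists_isCond_pos_forall_crossEnt_le (h𝒟 : ∀ p ∈ 𝒟, IsDist p) (hconv : Convex ℝ 𝒟)
    {H : ℝ} (hH : ∀ p ∈ 𝒟, condEnt p ≤ H) {s : ℝ} (hs0 : 0 < s) (hs1 : s < 1) {B : ℝ}
    (hB : H - Real.log s < B) :
    ∃ q, IsCond q ∧ (∀ x y, 0 < q x y) ∧ ∀ p ∈ 𝒟, crossEnt p q ≤ B := by
  have hpos := condAtLeast_subset_pos (𝒳 := 𝒳) (𝒴 := 𝒴)
    (div_pos (sub_pos.2 hs1) (Nat.cast_pos.2 (Fintype.card_pos (α := 𝒴))))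
  obtain ⟨q, hqK, hq⟩ := (isCompact_condAtLeast _).exists_forall_le_of_finset
    (f := fun ν : 𝒟 => crossEnt ν.1) (fun ν => (continuousOn_crossEnt ν.1).mono hpos) fun u => by
      obtain ⟨q, hqK, hq⟩ := exists_forall_lt_of_forall_sum_mul_lt (convex_condAtLeast _)
        ⟨_, smoothed_mem_condAtLeast hs0.le hs1.le (p := 0) fun _ => le_rfl⟩
        (f := fun ν : u => crossEnt ν.1.1)
        (fun ν => (convexOn_crossEnt (h𝒟 _ ν.1.2).1).subset hpos (convex_condAtLeast _))
        fun w hw => by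
          have hmix : ∑ ν : u, w ν • ν.1.1 ∈ 𝒟 :=
            hconv.sum_mem (fun ν _ => hw.1 ν) hw.2 fun ν _ => ν.1.2
          refine ⟨_, smoothed_mem_condAtLeast hs0.le hs1.le (h𝒟 _ hmix).1, ?_⟩
          rw [← crossEnt_sum_smul]
          linarith [crossEnt_smoothed_le (h𝒟 _ hmix) hs0 hs1.le, hH _ hmix]
      exact ⟨q, hqK, fun ν hν => (hq ⟨ν, hν⟩).le⟩
  exact ⟨q, hqK.1, hpos hqK, fun p hp => hq ⟨p, hp⟩⟩

theorem exists_isCond_forall_CEE_le (h𝒟 : ∀ p ∈ 𝒟, IsDist p) (hconv : Convex ℝ 𝒟) {H : ℝ}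
    (hH : ∀ p ∈ 𝒟, condEnt p ≤ H) {B : ℝ} (hB : H < B) :
    ∃ q, IsCond q ∧ ∀ p ∈ 𝒟, CEE p q ≤ B := by
  obtain ⟨q, hq, hqpos, hqB⟩ := exists_isCond_pos_forall_crossEnt_le (B := B) h𝒟 hconv hH
    (Real.exp_pos ((H - B) / 2)) (Real.exp_lt_one_iff.2 (by linarith))
    (by rw [Real.log_exp]; linarith)
  exact ⟨q, hq, fun p hp => (CEE_eq_crossEnt hqpos p).symm ▸ EReal.coe_le_coe_iff.2 (hqB p hp)⟩

end Minimax

theorem EReal.exists_coe_eq_iSup {ι : Type*} [Nonempty ι] {f : ι → ℝ} {C : ℝ}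
    (hC : ∀ i, f i ≤ C) : ∃ r : ℝ, ⨆ i, (f i : EReal) = r := by
  have hbot : ⨆ i, (f i : EReal) ≠ ⊥ :=
    ne_bot_of_le_ne_bot (EReal.coe_ne_bot _)
      (le_iSup (fun i => (f i : EReal)) (Classical.arbitrary ι))
  have htop : ⨆ i, (f i : EReal) ≠ ⊤ :=
    ne_top_of_le_ne_top (EReal.coe_ne_top C) (iSup_le fun i => EReal.coe_le_coe_iff.2 (hC i))
  exact ⟨_, (EReal.coe_toReal htop hbot).symm⟩

theorem robust_rule_KL_penalty_bounded_general [Fintype 𝒳] [Fintype 𝒴]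
    (𝒟 : Set (𝒳 × 𝒴 → ℝ)) (h𝒟 : ∀ p ∈ 𝒟, IsDist p)
    (hconv : Convex ℝ 𝒟)
    (μ : 𝒳 × 𝒴 → ℝ) (hμ : μ ∈ 𝒟)
    (qstar : 𝒳 → 𝒴 → ℝ) (hq : IsCond qstar)
    (hmin : ∀ q : 𝒳 → 𝒴 → ℝ, IsCond q →
      (⨆ ν : 𝒟, CEE ν.1 qstar) ≤ ⨆ ν : 𝒟, CEE ν.1 q) :
    condKLE μ qstar ≤ (⨆ ν : 𝒟, ((condEnt ν.1 : ℝ) : EReal)) - ((condEnt μ : ℝ) : EReal) ∧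
    condKLE μ qstar < ⊤ := by
  have := (h𝒟 μ hμ).nonempty_snd
  have : Nonempty 𝒟 := ⟨⟨μ, hμ⟩⟩
  obtain ⟨H, hH⟩ := EReal.exists_coe_eq_iSup fun ν : 𝒟 => condEnt_le_card (h𝒟 ν.1 ν.2)
  have hent : ∀ p ∈ 𝒟, condEnt p ≤ H := fun p hp => EReal.coe_le_coe_iff.1 <|
    hH ▸ le_iSup (fun ν : 𝒟 => (condEnt ν.1 : EReal)) ⟨p, hp⟩
  have hCEE : CEE μ qstar ≤ H := EReal.le_of_forall_lt_iff_le.1 fun B hB => by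
    obtain ⟨q, hq', hqB⟩ := exists_isCond_forall_CEE_le h𝒟 hconv hent (EReal.coe_lt_coe_iff.1 hB)
    calc CEE μ qstar ≤ ⨆ ν : 𝒟, CEE ν.1 qstar := le_iSup (fun ν : 𝒟 => CEE ν.1 qstar) ⟨μ, hμ⟩
      _ ≤ ⨆ ν : 𝒟, CEE ν.1 q := hmin q hq'
      _ ≤ B := iSup_le fun ν => hqB ν.1 ν.2
  rw [CEE_eq_condEnt_add_condKLE (h𝒟 μ hμ) hq.1, add_comm] at hCEE
  rw [hH]
  refine ⟨(EReal.le_sub_iff_add_le (.inl (EReal.coe_ne_bot _)) (.inl (EReal.coe_ne_top _))).2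
    hCEE, lt_top_iff_ne_top.2 fun htop => ?_⟩
  rw [htop, EReal.top_add_coe] at hCEE
  exact EReal.coe_ne_top _ (top_le_iff.1 hCEE)

/-- the KL-divergence penalty of a minimax-robust rule `q*` on the clean
distribution `μ ∈ 𝒟` is bounded by the entropy gap
`max_{ν∈𝒟} H_ν(Y|X) − H_μ(Y|X)`; in particular it is finite. -/
theorem robust_rule_KL_penalty_bounded [Fintype 𝒳] [Fintype 𝒴]
    (𝒟 : Set (𝒳 × 𝒴 → ℝ)) (h𝒟 : ∀ p ∈ 𝒟, IsDist p)
    (hclosed : IsClosed 𝒟) (hconv : Convex ℝ 𝒟)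
    (μ : 𝒳 × 𝒴 → ℝ) (hμ : μ ∈ 𝒟)
    (qstar : 𝒳 → 𝒴 → ℝ) (hq : IsCond qstar)
    (hmin : ∀ q : 𝒳 → 𝒴 → ℝ, IsCond q →
      (⨆ ν : 𝒟, CEE ν.1 qstar) ≤ ⨆ ν : 𝒟, CEE ν.1 q) :
    condKLE μ qstar ≤ (⨆ ν : 𝒟, ((condEnt ν.1 : ℝ) : EReal)) - ((condEnt μ : ℝ) : EReal) ∧
    condKLE μ qstar < ⊤ :=
  robust_rule_KL_penalty_bounded_general 𝒟 h𝒟 hconv μ hμ qstar hq hmin
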